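/- arXiv:2212.06255 — 4 statements merged into one kernel-verified Lean document; each statement's English description precedes it below -/
import Mathlib

section
/- Let U be a topological group with a complete metric inducing its topology, and let G ≤ U be a compact subgroup. If (Gₙ) is a sequence of closed subgroups of U such that for every open neighborhood V of G, Gₙ ⊆ V for all sufficiently large n (0-weak convergence to G), then some subsequence of (Gₙ) converges in the Hausdorff distance to a closed subgroup H of G. -/
/-!
Eventually `Gₙ` lies in a small thickening of the compact group `G`, so it is Hausdorff-close to
its shadow `G ∩ cthickening δ Gₙ`, a closed subset of `G`. The closed subsets of a compact metric
space form a compact space for the Hausdorff metric, so a subsequence of the shadows, hence of the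
`Gₙ`, converges to a closed `T ⊆ G`. A Hausdorff limit of closed sets is their Kuratowski lower
limit, and the lower limit of a sequence of subgroups is a subgroup by continuity of the group
operations.
-/

open Filter Topology Metric TopologicalSpace Set

def kuratowskiLiminf {X : Type*} [TopologicalSpace X] (S : ℕ → Set X) : Set X :=
  {x | ∀ W ∈ 𝓝 x, ∀ᶠ n in atTop, (S n ∩ W).Nonempty}

def Subgroup.kuratowskiLiminf {G : Type*} [TopologicalSpace G] [Group G] [IsTopologicalGroup G]
    (S : ℕ → Subgroup G) : Subgroup G where
  carrier := _root_.kuratowskiLiminf fun n => (S n : Set G)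
  one_mem' _ hW := Eventually.of_forall fun n => ⟨1, (S n).one_mem, mem_of_mem_nhds hW⟩
  mul_mem' {a b} ha hb W hW := by
    obtain ⟨u, hu, v, hv, huv⟩ := mem_nhds_prod_iff.mp (continuous_mul.tendsto (a, b) hW)
    filter_upwards [ha u hu, hb v hv] with n ⟨x, hxS, hxu⟩ ⟨y, hyS, hyv⟩
    exact ⟨x * y, (S n).mul_mem hxS hyS, huv (mk_mem_prod hxu hyv)⟩
  inv_mem' {a} ha W hW := by
    filter_upwards [ha _ (continuous_inv.tendsto a hW)] with n ⟨x, hxS, hxW⟩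
    exact ⟨x⁻¹, (S n).inv_mem hxS, hxW⟩

theorem Subgroup.coe_kuratowskiLiminf {G : Type*} [TopologicalSpace G] [Group G]
    [IsTopologicalGroup G] (S : ℕ → Subgroup G) :
    (Subgroup.kuratowskiLiminf S : Set G) = _root_.kuratowskiLiminf fun n => (S n : Set G) :=
  rfl

theorem kuratowskiLiminf_eq_of_tendsto_hausdorffEDist {X : Type*} [PseudoEMetricSpace X]
    {S : ℕ → Set X} {T : Set X} (hT : IsClosed T)
    (hST : Tendsto (fun n => hausdorffEDist (S n) T) atTop (𝓝 0)) :
    kuratowskiLiminf S = T := by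
  ext x
  constructor
  · intro hx
    rw [← hT.closure_eq, EMetric.mem_closure_iff]
    intro ε hε
    obtain ⟨n, ⟨z, hzS, hxz⟩, hn⟩ :=
      ((hx _ (eball_mem_nhds x (ENNReal.half_pos hε.ne'))).and
        (hST.eventually_lt_const (ENNReal.half_pos hε.ne'))).exists
    obtain ⟨y, hyT, hzy⟩ := exists_edist_lt_of_hausdorffEDist_lt hzS hn
    refine ⟨y, hyT, ?_⟩
    calc edist x y ≤ edist x z + edist z y := edist_triangle _ _ _
      _ < ε / 2 + ε / 2 := ENNReal.add_lt_add (mem_eball'.mp hxz) hzy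
      _ = ε := ENNReal.add_halves ε
  · intro hx W hW
    obtain ⟨ε, hε, hεW⟩ := EMetric.mem_nhds_iff.mp hW
    filter_upwards [hST.eventually_lt_const hε] with n hn
    rw [hausdorffEDist_comm] at hn
    obtain ⟨y, hyS, hxy⟩ := exists_edist_lt_of_hausdorffEDist_lt hx hn
    exact ⟨y, hyS, hεW (mem_eball'.mpr hxy)⟩

theorem hausdorffEDist_inter_cthickening_le {X : Type*} [PseudoEMetricSpace X] {A K : Set X}
    {δ : ℝ} (hA : A ⊆ thickening δ K) :
    hausdorffEDist A (K ∩ cthickening δ A) ≤ ENNReal.ofReal δ := by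
  refine hausdorffEDist_le_of_infEDist (fun x hx => ?_) fun z hz => mem_cthickening_iff.mp hz.2
  obtain ⟨z, hzK, hxz⟩ := infEDist_lt_iff.mp (mem_thickening_iff_infEDist_lt.mp (hA hx))
  have hzA : z ∈ cthickening δ A :=
    mem_cthickening_iff.mpr ((infEDist_le_edist_of_mem hx).trans (edist_comm x z ▸ hxz.le))
  exact (infEDist_le_edist_of_mem (mem_inter hzK hzA)).trans hxz.le

theorem IsCompact.exists_subseq_tendsto_hausdorffEDist_of_subset {X : Type*} [EMetricSpace X]
    {K : Set X} (hK : IsCompact K) {Q : ℕ → Set X} (hQK : ∀ n, Q n ⊆ K)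
    (hQ : ∀ n, IsClosed (Q n)) :
    ∃ T ⊆ K, IsClosed T ∧ ∃ φ : ℕ → ℕ, StrictMono φ ∧
      Tendsto (fun n => hausdorffEDist (Q (φ n)) T) atTop (𝓝 0) := by
  have := isCompact_iff_compactSpace.mp hK
  let Q' : ℕ → Closeds K := fun n => ⟨(↑) ⁻¹' Q n, (hQ n).preimage continuous_subtype_val⟩
  obtain ⟨T', φ, hφ, hlim⟩ := CompactSpace.tendsto_subseq Q'
  refine ⟨(↑) '' (T' : Set K), Subtype.coe_image_subset _ _,
    (T'.isClosed.isCompact.image continuous_subtype_val).isClosed, φ, hφ, ?_⟩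
  have hQ' : ∀ n, hausdorffEDist (Q n) ((↑) '' (T' : Set K)) = edist (Q' n) T' := fun n => by
    rw [Closeds.edist_eq, ← hausdorffEDist_image isometry_subtype_coe]
    congr 1
    exact ((Subtype.image_preimage_coe K (Q n)).trans (inter_eq_right.mpr (hQK n))).symm
  simpa only [hQ', Function.comp_apply] using tendsto_iff_edist_tendsto_0.mp hlim

theorem IsCompact.exists_subseq_tendsto_hausdorffEDist {X : Type*} [EMetricSpace X] {K : Set X}
    (hK : IsCompact K) {S : ℕ → Set X} (hS : ∀ V, IsOpen V → K ⊆ V → ∀ᶠ n in atTop, S n ⊆ V) :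
    ∃ T ⊆ K, IsClosed T ∧ ∃ φ : ℕ → ℕ, StrictMono φ ∧
      Tendsto (fun n => hausdorffEDist (S (φ n)) T) atTop (𝓝 0) := by
  set δ : ℕ → ℝ := fun k => 1 / (k + 1)
  obtain ⟨ψ, hψ, hψK⟩ : ∃ ψ : ℕ → ℕ, StrictMono ψ ∧ ∀ k, S (ψ k) ⊆ thickening (δ k) K :=
    extraction_forall_of_eventually fun k =>
      hS _ isOpen_thickening (self_subset_thickening (by positivity) K)
  set shadow : ℕ → Set X := fun k => K ∩ cthickening (δ k) (S (ψ k))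
  obtain ⟨T, hTK, hT, σ, hσ, hlim⟩ := hK.exists_subseq_tendsto_hausdorffEDist_of_subset
    (Q := shadow) (fun _ => inter_subset_left) fun _ => hK.isClosed.inter isClosed_cthickening
  refine ⟨T, hTK, hT, ψ ∘ σ, hψ.comp hσ, ?_⟩
  have hδ : Tendsto (fun j => ENNReal.ofReal (δ (σ j))) atTop (𝓝 0) := by
    simpa [δ, Function.comp_def] using
      (ENNReal.tendsto_ofReal tendsto_one_div_add_atTop_nhds_zero_nat).comp
      hσ.tendsto_atTop
  refine tendsto_of_tendsto_of_tendsto_of_le_of_le tendsto_const_nhds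
    (by simpa using hδ.add hlim) (fun _ => zero_le) fun j => ?_
  calc hausdorffEDist (S (ψ (σ j))) T
      ≤ hausdorffEDist (S (ψ (σ j))) (shadow (σ j)) + hausdorffEDist (shadow (σ j)) T :=
        hausdorffEDist_triangle
    _ ≤ ENNReal.ofReal (δ (σ j)) + hausdorffEDist (shadow (σ j)) T := by
        gcongr; exact hausdorffEDist_inter_cthickening_le (hψK _)

theorem stmt_0_general {U : Type*} [MetricSpace U] [Group U]
    [IsTopologicalGroup U]
    (G : Subgroup U) (hG : IsCompact (G : Set U))
    (Gn : ℕ → Subgroup U)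
    (hweak : ∀ V : Set U, IsOpen V → (G : Set U) ⊆ V →
      ∀ᶠ n in atTop, (Gn n : Set U) ⊆ V) :
    ∃ (H : Subgroup U) (φ : ℕ → ℕ), StrictMono φ ∧ IsClosed (H : Set U) ∧ H ≤ G ∧
      Tendsto (fun k => Metric.hausdorffDist ((Gn (φ k) : Set U)) (H : Set U))
        atTop (nhds 0) := by
  obtain ⟨T, hTG, hT, φ, hφ, hlim⟩ := hG.exists_subseq_tendsto_hausdorffEDist hweak
  have hH : (Subgroup.kuratowskiLiminf (Gn ∘ φ) : Set U) = T := by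
    rw [Subgroup.coe_kuratowskiLiminf]
    exact kuratowskiLiminf_eq_of_tendsto_hausdorffEDist hT hlim
  refine ⟨Subgroup.kuratowskiLiminf (Gn ∘ φ), φ, hφ, hH ▸ hT, fun x hx => hTG (hH ▸ hx), ?_⟩
  rw [hH]
  simpa [hausdorffDist, Function.comp_def] using
    (ENNReal.tendsto_toReal ENNReal.zero_ne_top).comp hlim

/-- A 0-weakly convergent sequence of closed subgroups of a completely metrized
topological group, converging to a compact subgroup `G`, has a subsequence
converging in Hausdorff distance to a closed subgroup `H ≤ G`. -/
theorem stmt_0 {U : Type*} [MetricSpace U] [CompleteSpace U] [Group U]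
    [IsTopologicalGroup U]
    (G : Subgroup U) (hG : IsCompact (G : Set U))
    (Gn : ℕ → Subgroup U) (hcl : ∀ n, IsClosed ((Gn n : Set U)))
    (hweak : ∀ V : Set U, IsOpen V → (G : Set U) ⊆ V →
      ∀ᶠ n in atTop, (Gn n : Set U) ⊆ V) :
    ∃ (H : Subgroup U) (φ : ℕ → ℕ), StrictMono φ ∧ IsClosed (H : Set U) ∧ H ≤ G ∧
      Tendsto (fun k => Metric.hausdorffDist ((Gn (φ k) : Set U)) (H : Set U))
        atTop (nhds 0) :=
  stmt_0_general G hG Gn hweak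
end

section
/- Let U be a group with a complete metric and G ≤ U a compact subgroup such that compact subgroups Hausdorff-close to G are conjugate to subgroups of G by elements close to 1 (Montgomery–Zippin property), and such that compact subgroups of equal dimension contained in one another are equal on identity components. Then: if K ≤ U is a compact subgroup of the same dimension as G, sufficiently close to G in the weak 0-topology (contained in a small neighborhood of G), the identity components K₀ and G₀ are conjugate in U. -/
/-! Montgomery–Zippin conjugates `K` by some `u` into `G`. The conjugate `u K u⁻¹` is a compact
subgroup of `G` of the same dimension as `G`, so it has the same identity component as `G`; and
conjugation, being a homeomorphism, carries the identity component of `K` onto that of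
`u K u⁻¹`. -/

theorem Subgroup.image_conj_connectedComponentIn_one {G : Type*} [Group G] [TopologicalSpace G]
    [ContinuousMul G] (u : G) (K : Subgroup G) :
    (fun g => u * g * u⁻¹) '' connectedComponentIn (K : Set G) 1 =
      connectedComponentIn (K.map (MulAut.conj u).toMonoidHom : Set G) 1 := by
  let e : G ≃ₜ G := (Homeomorph.mulLeft u).trans (Homeomorph.mulRight u⁻¹)
  have he : ⇑e = ⇑(MulAut.conj u).toMonoidHom := rfl
  have h := e.image_connectedComponentIn K.one_mem
  rwa [he, ← Subgroup.coe_map, map_one] at h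

theorem stmt_9_general {U : Type*} [MetricSpace U] [Group U]
    [IsTopologicalGroup U]
    (dim : Subgroup U → ℕ)
    (hdim_conj : ∀ (u : U) (K : Subgroup U),
      dim (K.map (MulAut.conj u).toMonoidHom) = dim K)
    (G : Subgroup U) (hG : IsCompact (G : Set U))
    (hMZ : ∀ ε > (0 : ℝ), ∃ δ > (0 : ℝ), ∀ K : Subgroup U, IsCompact (K : Set U) →
      (∀ x ∈ K, ∃ g ∈ G, dist x g < δ) →
      ∃ u : U, dist u 1 < ε ∧ K.map (MulAut.conj u).toMonoidHom ≤ G)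
    (heq : ∀ K L : Subgroup U, IsCompact (K : Set U) → IsCompact (L : Set U) →
      K ≤ L → dim K = dim L →
      connectedComponentIn (K : Set U) 1 = connectedComponentIn (L : Set U) 1) :
    ∃ δ > (0 : ℝ), ∀ K : Subgroup U, IsCompact (K : Set U) → dim K = dim G →
      (∀ x ∈ K, ∃ g ∈ G, dist x g < δ) →
      ∃ u : U, (fun g => u * g * u⁻¹) '' connectedComponentIn (K : Set U) 1 =
        connectedComponentIn (G : Set U) 1 := by
  obtain ⟨δ, hδ, hconj⟩ := hMZ 1 one_pos
  refine ⟨δ, hδ, fun K hK hdimK hclose => ?_⟩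
  obtain ⟨u, -, hle⟩ := hconj K hK hclose
  have hKu : IsCompact (K.map (MulAut.conj u).toMonoidHom : Set U) := by
    rw [Subgroup.coe_map]
    exact hK.image (IsTopologicalGroup.continuous_conj u)
  refine ⟨u, ?_⟩
  rw [Subgroup.image_conj_connectedComponentIn_one]
  exact heq _ G hKu hG hle (by rw [hdim_conj, hdimK])

/-- Montgomery–Zippin style conjugacy of identity components: in a completely
metrized (Banach Lie) group `U` with a compact subgroup `G`, assuming
(i) the Montgomery–Zippin property (compact subgroups Hausdorff-close to `G`
are conjugate into `G` by elements close to `1`),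
(ii) a conjugation-invariant dimension function on subgroups, and
(iii) that equidimensional compact subgroups contained in one another have the
same identity component, any compact subgroup `K` of the same dimension as `G`,
contained in a sufficiently small neighborhood of `G` (weak 0-topology), has
identity component conjugate in `U` to that of `G`. -/
theorem stmt_9 {U : Type*} [MetricSpace U] [CompleteSpace U] [Group U]
    [IsTopologicalGroup U]
    (dim : Subgroup U → ℕ)
    (hdim_conj : ∀ (u : U) (K : Subgroup U),
      dim (K.map (MulAut.conj u).toMonoidHom) = dim K)
    (G : Subgroup U) (hG : IsCompact (G : Set U))
    (hMZ : ∀ ε > (0 : ℝ), ∃ δ > (0 : ℝ), ∀ K : Subgroup U, IsCompact (K : Set U) →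
      (∀ x ∈ K, ∃ g ∈ G, dist x g < δ) →
      ∃ u : U, dist u 1 < ε ∧ K.map (MulAut.conj u).toMonoidHom ≤ G)
    (heq : ∀ K L : Subgroup U, IsCompact (K : Set U) → IsCompact (L : Set U) →
      K ≤ L → dim K = dim L →
      connectedComponentIn (K : Set U) 1 = connectedComponentIn (L : Set U) 1) :
    ∃ δ > (0 : ℝ), ∀ K : Subgroup U, IsCompact (K : Set U) → dim K = dim G →
      (∀ x ∈ K, ∃ g ∈ G, dist x g < δ) →
      ∃ u : U, (fun g => u * g * u⁻¹) '' connectedComponentIn (K : Set U) 1 =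
        connectedComponentIn (G : Set U) 1 :=
  stmt_9_general dim hdim_conj G hG hMZ heq
end

section
/- Let U be a Banach Lie group. If V is a sufficiently small symmetric neighborhood of 1 in U, then the sequence of iterated commutator sets V⁽⁰⁾ = V, V⁽ⁿ⁺¹⁾ = [V, V⁽ⁿ⁾] = {xyx⁻¹y⁻¹ : x ∈ V, y ∈ V⁽ⁿ⁾} is such that every neighborhood W of 1 contains V⁽ⁿ⁾ for all sufficiently large n (the iterated commutators converge to {1}). -/
open scoped Manifold
open Filter

/-- Iterated commutator sets: `V⁽⁰⁾ = V`, `V⁽ⁿ⁺¹⁾ = [V, V⁽ⁿ⁾]`. -/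
def commutatorSets {U : Type*} [Group U] (V : Set U) : ℕ → Set U
  | 0 => V
  | n + 1 => {z | ∃ x ∈ V, ∃ y ∈ commutatorSets V n, z = x * y * x⁻¹ * y⁻¹}

/-! Read in the chart at `1`, the commutator map is a `C¹` map of two variables that is constant
on both coordinate axes, so its derivative at the identity vanishes and it is `1/2`-Lipschitz
nearby. As `⁅x, 1⁆ = 1`, on a small chart ball a commutator `⁅x, y⁆` is at most half as far from
`1` as `y`, so `V⁽ⁿ⁾` lies in the chart ball of radius `r / 2ⁿ`. -/

open Set Metric Topology
open scoped commutatorElement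

section ConstantOnAxes

variable {𝕜 : Type*} [NontriviallyNormedField 𝕜]
  {E F G : Type*} [NormedAddCommGroup E] [NormedSpace 𝕜 E] [NormedAddCommGroup F]
  [NormedSpace 𝕜 F] [NormedAddCommGroup G] [NormedSpace 𝕜 G]
  {f : E × F → G} {f' : E × F →L[𝕜] G} {a : E} {b : F} {c : G}

theorem HasFDerivAt.eq_zero_of_const_on_axes (hf : HasFDerivAt f f' (a, b))
    (h₁ : ∀ x, f (x, b) = c) (h₂ : ∀ y, f (a, y) = c) : f' = 0 := by
  refine ContinuousLinearMap.prod_ext ?_ ?_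
  · refine (hf.comp a (hasFDerivAt_prodMk_left a b)).unique ?_
    simpa [Function.comp_def, h₁] using hasFDerivAt_const c a
  · refine (hf.comp b (hasFDerivAt_prodMk_right a b)).unique ?_
    simpa [Function.comp_def, h₂] using hasFDerivAt_const c b

theorem HasStrictFDerivAt.eventually_dist_le_of_const_on_axes
    (hf : HasStrictFDerivAt f f' (a, b)) (h₁ : ∀ x, f (x, b) = c) (h₂ : ∀ y, f (a, y) = c)
    {k : ℝ} (hk : 0 < k) :
    ∀ᶠ p in 𝓝 (a, b), dist (f p) c ≤ k * dist p.2 b := by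
  have hf' : f' = 0 := hf.hasFDerivAt.eq_zero_of_const_on_axes h₁ h₂
  obtain ⟨s, hs, hlip⟩ := hf.exists_lipschitzOnWith_of_nnnorm_lt ⟨k, hk.le⟩
    (by simpa [hf', ← NNReal.coe_pos])
  have hs' : ∀ᶠ p : E × F in 𝓝 (a, b), (p.1, b) ∈ s :=
    (continuous_fst.prodMk continuous_const).continuousAt.preimage_mem_nhds (by simpa using hs)
  filter_upwards [hs, hs'] with p hp hpb
  calc dist (f p) c = dist (f p) (f (p.1, b)) := by rw [h₁]
    _ ≤ k * dist p (p.1, b) := hlip.dist_le_mul p hp _ hpb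
    _ = k * dist p.2 b := by simp [Prod.dist_eq]

end ConstantOnAxes

theorem ContMDiffAt.contDiffAt_writtenInExtChartAt {𝕜 : Type*} [NontriviallyNormedField 𝕜]
    {E : Type*} [NormedAddCommGroup E] [NormedSpace 𝕜 E] {H : Type*} [TopologicalSpace H]
    {I : ModelWithCorners 𝕜 E H} [I.Boundaryless]
    {E' : Type*} [NormedAddCommGroup E'] [NormedSpace 𝕜 E'] {H' : Type*} [TopologicalSpace H']
    {I' : ModelWithCorners 𝕜 E' H'} {M : Type*} [TopologicalSpace M] [ChartedSpace H M]
    {M' : Type*} [TopologicalSpace M'] [ChartedSpace H' M'] {n : WithTop ℕ∞} {f : M → M'}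
    {x : M} (hf : ContMDiffAt I I' n f x) :
    ContDiffAt 𝕜 n (writtenInExtChartAt I I' x f) (extChartAt I x x) := by
  have := (contMDiffAt_iff.1 hf).2
  rwa [I.range_eq_univ, contDiffWithinAt_univ] at this

theorem LieGroup.contMDiff_commutator {𝕜 : Type*} [NontriviallyNormedField 𝕜]
    {E : Type*} [NormedAddCommGroup E] [NormedSpace 𝕜 E] {H : Type*} [TopologicalSpace H]
    {I : ModelWithCorners 𝕜 E H} {G : Type*} [TopologicalSpace G] [ChartedSpace H G] [Group G]
    {n : WithTop ℕ∞} [LieGroup I n G] :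
    ContMDiff (I.prod I) I n fun p : G × G => ⁅p.1, p.2⁆ :=
  ((contMDiff_fst.mul contMDiff_snd).mul contMDiff_fst.inv).mul contMDiff_snd.inv

section LieGroup

variable (𝕜 : Type*) [RCLike 𝕜] {E : Type*} [NormedAddCommGroup E] [NormedSpace 𝕜 E]
  (G : Type*) [TopologicalSpace G] [ChartedSpace E G] [Group G] {n : WithTop ℕ∞}
  [LieGroup 𝓘(𝕜, E) n G]

local notation "φ" => extChartAt 𝓘(𝕜, E) (1 : G)

theorem LieGroup.contDiffAt_commutator_extChartAt :
    ContDiffAt 𝕜 n (fun p : E × E => φ ⁅(φ).symm p.1, (φ).symm p.2⁆) (φ 1, φ 1) := by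
  have := (contMDiff_commutator (I := 𝓘(𝕜, E)) (n := n) ((1 : G), (1 : G))
    ).contDiffAt_writtenInExtChartAt
  simp only [writtenInExtChartAt, extChartAt_prod, commutatorElement_self] at this
  exact this

theorem LieGroup.exists_dist_commutator_extChartAt_le (hn : n ≠ 0) {k : ℝ} (hk : 0 < k) :
    ∃ r > 0, ∀ x ∈ (φ).source, dist (φ x) (φ 1) < r → ∀ y ∈ (φ).source, dist (φ y) (φ 1) < r →
      ⁅x, y⁆ ∈ (φ).source ∧ dist (φ ⁅x, y⁆) (φ 1) ≤ k * dist (φ y) (φ 1) := by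
  have hstrict :=
    (contDiffAt_commutator_extChartAt 𝕜 G (E := E) (n := n)).hasStrictFDerivAt hn
  have hdist := hstrict.eventually_dist_le_of_const_on_axes (c := φ 1)
    (fun _ => by simp only [extChartAt_to_inv, commutatorElement_one_right])
    (fun _ => by simp only [extChartAt_to_inv, commutatorElement_one_left]) hk
  have hsrc : ∀ᶠ p : E × E in 𝓝 (φ 1, φ 1), ⁅(φ).symm p.1, (φ).symm p.2⁆ ∈ (φ).source := by
    refine ((contMDiff_commutator (I := 𝓘(𝕜, E)) (n := n)).continuous.continuousAt.comp
      ((continuousAt_extChartAt_symm 1).prodMap (continuousAt_extChartAt_symm 1))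
      ).preimage_mem_nhds ?_
    simpa only [Function.comp_apply, Prod.map, extChartAt_to_inv, commutatorElement_self]
      using extChartAt_source_mem_nhds (I := 𝓘(𝕜, E)) (1 : G)
  obtain ⟨r, hr, hball⟩ := Metric.eventually_nhds_iff_ball.1 (hdist.and hsrc)
  refine ⟨r, hr, fun x hx hxr y hy hyr => ?_⟩
  have := hball (φ x, φ y) (by rw [← ball_prod_same]; exact ⟨hxr, hyr⟩)
  simpa only [(φ).left_inv hx, (φ).left_inv hy] using this.symm

end LieGroup

theorem commutatorSets_subset_of_contracting {G : Type*} [Group G] {V₀ V : Set G}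
    {ρ : G → ℝ} {c R : ℝ} (hc : 0 ≤ c) (hR : ∀ z ∈ V₀, ρ z ≤ R)
    (hcomm : ∀ x ∈ V₀, ∀ y ∈ V₀, ⁅x, y⁆ ∈ V₀ ∧ ρ ⁅x, y⁆ ≤ c * ρ y) (hV : V ⊆ V₀) :
    ∀ n, commutatorSets V n ⊆ {z ∈ V₀ | ρ z ≤ c ^ n * R}
  | 0, z, hz => ⟨hV hz, by simpa using hR z (hV hz)⟩
  | n + 1, _, ⟨x, hx, y, hy, hz⟩ => by
    obtain ⟨hyV₀, hyρ⟩ := commutatorSets_subset_of_contracting hc hR hcomm hV n hy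
    obtain ⟨hxyV₀, hxyρ⟩ := hcomm x (hV hx) y hyV₀
    rw [hz, ← commutatorElement_def]
    refine ⟨hxyV₀, hxyρ.trans ?_⟩
    calc c * ρ y ≤ c * (c ^ n * R) := by gcongr
      _ = c ^ (n + 1) * R := by ring

theorem eventually_setOf_dist_extChartAt_le_subset {𝕜 : Type*} [NontriviallyNormedField 𝕜]
    {E : Type*} [NormedAddCommGroup E] [NormedSpace 𝕜 E] {H : Type*} [TopologicalSpace H]
    {I : ModelWithCorners 𝕜 E H} {M : Type*} [TopologicalSpace M] [ChartedSpace H M]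
    {x : M} {W : Set M} (hW : W ∈ 𝓝 x) {ι : Type*} {l : Filter ι} {δ : ι → ℝ}
    (hδ : Tendsto δ l (𝓝 0)) :
    ∀ᶠ i in l, {z ∈ (extChartAt I x).source |
      dist (extChartAt I x z) (extChartAt I x x) ≤ δ i} ⊆ W := by
  have hW' : (extChartAt I x).symm ⁻¹' W ∈ 𝓝 (extChartAt I x x) :=
    (continuousAt_extChartAt_symm x).preimage_mem_nhds (by rwa [extChartAt_to_inv])
  obtain ⟨ε, hε, hball⟩ := Metric.mem_nhds_iff.1 hW'
  filter_upwards [hδ.eventually (gt_mem_nhds hε)] with i hi z ⟨hz, hzδ⟩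
  simpa only [mem_preimage, (extChartAt I x).left_inv hz] using hball (hzδ.trans_lt hi)

theorem stmt_12_general
    {E : Type*} [NormedAddCommGroup E] [NormedSpace ℝ E]
    {U : Type*} [TopologicalSpace U] [ChartedSpace E U] [Group U]
    [LieGroup 𝓘(ℝ, E) (⊤ : ℕ∞) U] :
    ∃ V₀ ∈ nhds (1 : U), ∀ V : Set U, V ⊆ V₀ → IsOpen V → (1 : U) ∈ V →
      V⁻¹ = V →
      ∀ W ∈ nhds (1 : U), ∀ᶠ n in atTop, commutatorSets V n ⊆ W := by
  set φ := extChartAt 𝓘(ℝ, E) (1 : U)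
  obtain ⟨r, hr, hcomm⟩ := LieGroup.exists_dist_commutator_extChartAt_le ℝ U
    (E := E) (n := (⊤ : ℕ∞)) (by simp) (k := 1 / 2) (by norm_num)
  set V₀ := {z ∈ φ.source | dist (φ z) (φ 1) < r}
  have hV₀ : V₀ ∈ 𝓝 1 := inter_mem (extChartAt_source_mem_nhds 1)
    ((continuousAt_extChartAt 1).preimage_mem_nhds (ball_mem_nhds _ hr))
  have hV₀comm : ∀ x ∈ V₀, ∀ y ∈ V₀,
      ⁅x, y⁆ ∈ V₀ ∧ dist (φ ⁅x, y⁆) (φ 1) ≤ 1 / 2 * dist (φ y) (φ 1) := by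
    rintro x ⟨hx, hxr⟩ y ⟨hy, hyr⟩
    obtain ⟨hsrc, hdist⟩ := hcomm x hx hxr y hy hyr
    exact ⟨⟨hsrc, hdist.trans_lt (by linarith [dist_nonneg (x := φ y) (y := φ 1)])⟩, hdist⟩
  have hδ : Tendsto (fun n : ℕ => (1 / 2 : ℝ) ^ n * r) atTop (𝓝 0) := by
    simpa using (tendsto_pow_atTop_nhds_zero_of_lt_one (r := (1 / 2 : ℝ)) (by norm_num)
      (by norm_num)).mul_const r
  refine ⟨V₀, hV₀, fun V hV _ _ _ W hW => ?_⟩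
  filter_upwards [eventually_setOf_dist_extChartAt_le_subset (I := 𝓘(ℝ, E)) hW hδ] with n hn
  exact (commutatorSets_subset_of_contracting (by norm_num) (fun z hz => hz.2.le) hV₀comm hV n
    ).trans fun z hz => hn ⟨hz.1.1, hz.2⟩

/-- In a Banach Lie group, for every sufficiently small symmetric open
neighborhood `V` of `1`, the iterated commutator sets `V⁽ⁿ⁾` converge to `{1}`:
every neighborhood `W` of `1` contains `V⁽ⁿ⁾` for all large `n`. -/
theorem stmt_12
    {E : Type*} [NormedAddCommGroup E] [NormedSpace ℝ E] [CompleteSpace E]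
    {U : Type*} [TopologicalSpace U] [ChartedSpace E U] [Group U]
    [IsTopologicalGroup U] [LieGroup 𝓘(ℝ, E) (⊤ : ℕ∞) U] :
    ∃ V₀ ∈ nhds (1 : U), ∀ V : Set U, V ⊆ V₀ → IsOpen V → (1 : U) ∈ V →
      V⁻¹ = V →
      ∀ W ∈ nhds (1 : U), ∀ᶠ n in atTop, commutatorSets V n ⊆ W :=
  stmt_12_general (E := E)
end

section
/- In the semidirect product U = T² ⋊ ℤ, where the generator of ℤ acts on T² = ℝ²/ℤ² by the matrix [[1,1],[0,1]], let G be the diagonal circle {(z,z) : z ∈ S¹} and Gₙ ≤ G the subgroup of elements whose entries are 2ⁿ-th roots of unity. Then Gₙ → G in the Hausdorff distance, the subgroup 2ⁿℤ ⊆ ℤ ⊆ U centralizes Gₙ for each n, but no nontrivial element of ℤ ⊆ U normalizes G. -/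
open Filter

noncomputable section

/-- The 2-torus `T² = ℝ²/ℤ²`. -/
abbrev T2 : Type := AddCircle (1 : ℝ) × AddCircle (1 : ℝ)

/-- The shear automorphism of `T²` induced by the matrix `[[1,1],[0,1]]`. -/
def shear : T2 ≃+ T2 where
  toFun p := (p.1 + p.2, p.2)
  invFun p := (p.1 - p.2, p.2)
  left_inv p := by simp
  right_inv p := by simp
  map_add' p q := by
    refine Prod.ext ?_ rfl
    show (p.1 + q.1) + (p.2 + q.2) = (p.1 + p.2) + (q.1 + q.2)
    abel

/-- The action of `ℤ` on `T²` generated by `shear`. -/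
def shearAction : Multiplicative ℤ →* MulAut (Multiplicative T2) :=
  zpowersHom _ (AddEquiv.toMultiplicative shear)

/-- The semidirect product `U = T² ⋊ ℤ`. -/
abbrev U17 : Type := SemidirectProduct (Multiplicative T2) (Multiplicative ℤ) shearAction

/-- The diagonal circle `G = {(z,z)} ⊆ T²`. -/
def diagSub : AddSubgroup T2 :=
  AddMonoidHom.range
    ({ toFun := fun z => (z, z), map_zero' := rfl,
       map_add' := fun _ _ => rfl } : AddCircle (1 : ℝ) →+ T2)

/-- The `m`-torsion subgroup of `T²`. -/
def tor (m : ℕ) : AddSubgroup T2 where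
  carrier := {p | m • p = 0}
  zero_mem' := by
    show m • (0 : T2) = 0
    rw [smul_zero]
  add_mem' := by
    intro a b ha hb
    simp only [Set.mem_setOf_eq] at *
    rw [smul_add, ha, hb, add_zero]
  neg_mem' := by
    intro a ha
    simp only [Set.mem_setOf_eq] at *
    rw [smul_neg, ha, neg_zero]

/-!
Conjugation by the generator `t ∈ ℤ` acts on `T²` by `(a, b) ↦ (a + b, b)`, so `tᵏ` sends
`(a, b)` to `(a + k b, b)`. Hence `tᵏ` fixes every point whose second coordinate is killed by `k`,
in particular all of `Gₙ` when `2ⁿ ∣ k`; but it moves the diagonal point `(z, z)` off the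
diagonal as soon as `k z ≠ 0`, and the circle has such a `z` for every `k ≠ 0`. Finally every
`z ∈ ℝ/ℤ` lies within `1/(2m)` of an `m`-torsion point (round `m z`), so `G` lies in the
`2⁻⁽ⁿ⁺¹⁾`-neighbourhood of `Gₙ`.
-/

namespace SemidirectProduct

variable {N G : Type*} [Group N] [Group G] {φ : G →* MulAut N}

theorem commute_inl_inr_iff {n : N} {g : G} :
    Commute (inl n : N ⋊[φ] G) (inr g) ↔ φ g n = n := by
  rw [← inl_injective.eq_iff (f := (inl : N → N ⋊[φ] G)), inl_aut,
    map_inv, mul_inv_eq_iff_eq_mul, eq_comm, commute_iff_eq]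

end SemidirectProduct

namespace AddCircle

variable {p : ℝ}

theorem dist_coe_le_abs_sub (a b : ℝ) : dist (a : AddCircle p) (b : AddCircle p) ≤ |a - b| := by
  rw [dist_eq_norm, ← coe_sub]
  exact QuotientAddGroup.norm_mk_le_norm

theorem exists_nsmul_eq_zero_dist_le (hp : 0 < p) {m : ℕ} (hm : 0 < m) (x : AddCircle p) :
    ∃ y : AddCircle p, m • y = 0 ∧ dist x y ≤ p / (2 * m) := by
  obtain ⟨a, rfl⟩ := QuotientAddGroup.mk_surjective x
  have hm' : (0 : ℝ) < m := Nat.cast_pos.mpr hm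
  set j : ℤ := round (m * a / p)
  refine ⟨((j * p / m : ℝ) : AddCircle p), ?_, ?_⟩
  · rw [← coe_nsmul, coe_eq_zero_iff]
    exact ⟨j, by rw [nsmul_eq_mul, zsmul_eq_mul]; field_simp⟩
  · calc dist (a : AddCircle p) ((j * p / m : ℝ) : AddCircle p)
        ≤ |a - j * p / m| := dist_coe_le_abs_sub _ _
      _ = p / m * |m * a / p - j| := by
          rw [← abs_of_pos (div_pos hp hm'), ← abs_mul]
          congr 1; field_simp
      _ ≤ p / m * (1 / 2) := by gcongr; exact abs_sub_round _
      _ = p / (2 * m) := by field_simp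

theorem exists_zsmul_ne_zero (hp : 0 < p) {k : ℤ} (hk : k ≠ 0) :
    ∃ x : AddCircle p, k • x ≠ 0 := by
  have := Fact.mk hp
  refine ⟨((p / (k.natAbs + 1 : ℕ) : ℝ) : AddCircle p), fun h => ?_⟩
  rw [← addOrderOf_dvd_iff_zsmul_eq_zero, addOrderOf_period_div k.natAbs.succ_pos,
    Int.natCast_dvd] at h
  exact absurd (Nat.le_of_dvd (Int.natAbs_pos.mpr hk) h) (by omega)

end AddCircle

theorem mem_diagSub {p : T2} : p ∈ diagSub ↔ p.1 = p.2 :=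
  ⟨by rintro ⟨z, rfl⟩; rfl, fun h => ⟨p.2, Prod.ext h.symm rfl⟩⟩

theorem shearAction_apply (k : ℤ) (p : T2) :
    shearAction (Multiplicative.ofAdd k) (Multiplicative.ofAdd p)
      = Multiplicative.ofAdd (p.1 + k • p.2, p.2) := by
  change ((AddEquiv.toMultiplicative shear) ^ k) (Multiplicative.ofAdd p) = _
  induction k using Int.induction_on generalizing p with
  | zero => simp
  | succ n ih =>
    rw [zpow_add_one, MulAut.mul_apply]
    change (AddEquiv.toMultiplicative shear ^ (n : ℤ)) (Multiplicative.ofAdd (p.1 + p.2, p.2)) = _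
    rw [ih]
    exact congrArg _ (Prod.ext (by dsimp only; module) rfl)
  | pred n ih =>
    rw [zpow_sub_one, MulAut.mul_apply]
    change (AddEquiv.toMultiplicative shear ^ (-n : ℤ)) (Multiplicative.ofAdd (p.1 - p.2, p.2)) = _
    rw [ih]
    exact congrArg _ (Prod.ext (by dsimp only; module) rfl)

theorem inr_mul_inl_mul_inr_inv (k : ℤ) (p : T2) :
    (SemidirectProduct.inr (Multiplicative.ofAdd k) : U17) * SemidirectProduct.inl
        (Multiplicative.ofAdd p) * (SemidirectProduct.inr (Multiplicative.ofAdd k))⁻¹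
      = SemidirectProduct.inl (Multiplicative.ofAdd (p.1 + k • p.2, p.2)) := by
  rw [← map_inv, ← SemidirectProduct.inl_aut, shearAction_apply]

theorem hausdorffDist_diagSub_inf_tor_le {m : ℕ} (hm : 0 < m) :
    Metric.hausdorffDist ((diagSub ⊓ tor m : AddSubgroup T2) : Set T2) (diagSub : Set T2)
      ≤ 1 / (2 * m) := by
  apply Metric.hausdorffDist_le_of_mem_dist (by positivity)
  · exact fun p hp => ⟨p, hp.1, by simp⟩
  · rintro _ ⟨z, rfl⟩
    obtain ⟨y, hy, hzy⟩ := AddCircle.exists_nsmul_eq_zero_dist_le one_pos hm z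
    refine ⟨(y, y), ⟨⟨y, rfl⟩, Prod.ext hy hy⟩, ?_⟩
    change dist (z, z) (y, y) ≤ _
    rwa [Prod.dist_eq, max_self]

theorem zsmul_snd_eq_zero_of_mem_tor {m : ℕ} {k : ℤ} (hk : (m : ℤ) ∣ k) {p : T2}
    (hp : p ∈ tor m) : k • p.2 = 0 := by
  have hm : m • p.2 = 0 := congrArg Prod.snd hp
  exact addOrderOf_dvd_iff_zsmul_eq_zero.mp
    ((Int.natCast_dvd_natCast.mpr (addOrderOf_dvd_of_nsmul_eq_zero hm)).trans hk)

/-- In `U = T² ⋊ ℤ` (shear action), with `G` the diagonal circle and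
`Gₙ = G ∩ (2ⁿ-torsion)` the `2ⁿ`-th roots of unity in it:
`Gₙ → G` in Hausdorff distance, each `2ⁿℤ ⊆ ℤ ⊆ U` centralizes `Gₙ`, but no
nontrivial element of `ℤ ⊆ U` normalizes `G`. -/
theorem stmt_17 :
    Tendsto (fun n : ℕ =>
        Metric.hausdorffDist
          ((diagSub ⊓ tor (2 ^ n) : AddSubgroup T2) : Set T2)
          ((diagSub : AddSubgroup T2) : Set T2))
      atTop (nhds 0) ∧
    (∀ (n : ℕ) (k : ℤ), (2 ^ n : ℤ) ∣ k →
      ∀ p ∈ diagSub ⊓ tor (2 ^ n),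
        Commute (SemidirectProduct.inl (Multiplicative.ofAdd p) : U17)
          (SemidirectProduct.inr (Multiplicative.ofAdd k))) ∧
    (∀ k : ℤ, k ≠ 0 →
      ¬ ((fun s : U17 =>
            (SemidirectProduct.inr (Multiplicative.ofAdd k) : U17) * s *
              (SemidirectProduct.inr (Multiplicative.ofAdd k) : U17)⁻¹) ''
          (⇑SemidirectProduct.inl '' (⇑Multiplicative.ofAdd ''
            ((diagSub : AddSubgroup T2) : Set T2))) =
        ⇑SemidirectProduct.inl '' (⇑Multiplicative.ofAdd ''
          ((diagSub : AddSubgroup T2) : Set T2)))) := by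
  refine ⟨?_, ?_, ?_⟩
  · have hbound : Tendsto (fun n : ℕ => 1 / (2 * ((2 ^ n : ℕ) : ℝ))) atTop (nhds 0) := by
      push_cast
      exact tendsto_const_nhds.div_atTop
        ((tendsto_pow_atTop_atTop_of_one_lt one_lt_two).const_mul_atTop two_pos)
    exact squeeze_zero (fun _ => Metric.hausdorffDist_nonneg)
      (fun n => hausdorffDist_diagSub_inf_tor_le (Nat.two_pow_pos n)) hbound
  · intro n k hk p hp
    rw [SemidirectProduct.commute_inl_inr_iff, shearAction_apply,
      zsmul_snd_eq_zero_of_mem_tor (by exact_mod_cast hk) hp.2, add_zero]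
  · intro k hk hG
    obtain ⟨z, hz⟩ := AddCircle.exists_zsmul_ne_zero one_pos hk
    have hmem : (SemidirectProduct.inl (Multiplicative.ofAdd (z + k • z, z)) : U17) ∈
        ⇑SemidirectProduct.inl '' (⇑Multiplicative.ofAdd '' (diagSub : Set T2)) := by
      rw [← hG]
      exact ⟨_, ⟨_, ⟨(z, z), mem_diagSub.mpr rfl, rfl⟩, rfl⟩, inr_mul_inl_mul_inr_inv k (z, z)⟩
    rw [(SemidirectProduct.inl_injective (φ := shearAction)).mem_set_image,
      Multiplicative.ofAdd.injective.mem_set_image, SetLike.mem_coe, mem_diagSub] at hmem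
    exact hz (add_eq_left.mp hmem)
end
end
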